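/- Let R̄ = R/(t_1^{m+1},...,t_r^{m+1}). The induced differential on K_r(m) ⊗_R R̄ vanishes, and the cohomology H(K_r(0) ⊗_R R̄) is the exterior algebra over k generated by the r classes [t_1^m s_1^0],...,[t_r^m s_r^0]; the map induced in cohomology with R̄-coefficients by the standard map ι sends t_i to [t_i^m s_i^0] and sends s_1^m∧...∧s_r^m to the nonzero class [t_1^m ⋯ t_r^m s_1^0∧...∧s_r^0]. -/

import Mathlib

set_option synthInstance.maxHeartbeats 1000000
set_option maxHeartbeats 1000000

/-!
Statement 3: let `R̄ = R/(t₁^{m+1},…,t_r^{m+1})`.  The differential induced on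
`K_r(m) ⊗_R R̄` vanishes, and `H(K_r(0) ⊗_R R̄)` is the exterior algebra over `k` generated
by the `r` classes `[tᵢ^m sᵢ^0]`: the classes of the cycles `z_S := (∏_{i∈S} tᵢ^m)·e_S`
(`S ⊆ {1,…,r}`), which are the products of those generators, form a `k`-basis of the
cohomology, and they multiply by the exterior-algebra rule.  The map induced in cohomology
with `R̄`-coefficients by the standard map `ι` sends (the class of) `sᵢ^m` to `[tᵢ^m sᵢ^0]`
and sends `s₁^m∧…∧s_r^m` to the nonzero class `[t₁^m⋯t_r^m s₁^0∧…∧s_r^0]`.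
The complexes `K_r(m) ⊗_R R̄` are modelled as `Finset (Fin r) → R̄` with the reduced
Koszul differential, as in Statement 0.
-/

open MvPolynomial

variable (k : Type*) [Field k] (r m : ℕ)

/-- The ideal `(t₁^{m+1},…,t_r^{m+1})` of `R = k[t₁,…,t_r]`. -/
noncomputable def Jdl : Ideal (MvPolynomial (Fin r) k) :=
  Ideal.span (Set.range fun i : Fin r => X i ^ (m + 1))

/-- `R̄ = R/(t₁^{m+1},…,t_r^{m+1})`. -/
abbrev Rbar := MvPolynomial (Fin r) k ⧸ Jdl k r m

/-- The differential induced on `K_r(m') ⊗_R R̄` (for the Koszul complex with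
`d(sᵢ) = tᵢ^{m'+1}`), modelled on `Finset (Fin r) → R̄`. -/
noncomputable def koszulDbar (m' : ℕ) :
    (Finset (Fin r) → Rbar k r m) →ₗ[Rbar k r m] (Finset (Fin r) → Rbar k r m) :=
  LinearMap.pi fun S => ∑ i ∈ Sᶜ,
    (Ideal.Quotient.mk (Jdl k r m)
        (((-1 : MvPolynomial (Fin r) k) ^ (S.filter (fun j => j < i)).card) * X i ^ (m' + 1))) •
      (LinearMap.proj (insert i S) :
        (Finset (Fin r) → Rbar k r m) →ₗ[Rbar k r m] Rbar k r m)

/-- The cycle `z_S = (∏_{i∈S} tᵢ^m)·e_S` in `K_r(0) ⊗_R R̄`, representing the product of the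
classes `[tᵢ^m sᵢ^0]`, `i ∈ S`. -/
noncomputable def zb (S : Finset (Fin r)) : Finset (Fin r) → Rbar k r m :=
  Pi.single S (Ideal.Quotient.mk (Jdl k r m) (∏ i ∈ S, X i ^ m))

/-- The exterior (wedge) product on `Finset (Fin r) → R̄`. -/
noncomputable def kMulBar (f g : Finset (Fin r) → Rbar k r m) : Finset (Fin r) → Rbar k r m :=
  fun U => ∑ S ∈ U.powerset,
    ((-1 : Rbar k r m) ^ (∑ i ∈ S, (((U \ S)).filter (fun j => j < i)).card)) *
      (f S * g (U \ S))

/-- The map `ι ⊗_R R̄ : K_r(m) ⊗_R R̄ → K_r(0) ⊗_R R̄` induced by the standard map `ι`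
(`ι(e_S) = (∏_{i∈S} tᵢ^m)·e_S`). -/
noncomputable def kIotaBar :
    (Finset (Fin r) → Rbar k r m) →ₗ[Rbar k r m] (Finset (Fin r) → Rbar k r m) :=
  LinearMap.pi fun S =>
    (Ideal.Quotient.mk (Jdl k r m) (∏ i ∈ S, X i ^ m)) •
      (LinearMap.proj S : (Finset (Fin r) → Rbar k r m) →ₗ[Rbar k r m] Rbar k r m)

/-
Everything is lifted to `K_r(0)` over `R = k[t]` (`Cochain`, `koszulD`) and reduced modulo
`J = (t₁^{m+1},…,t_r^{m+1})` at the end (`reduce`); `J` is the monomial ideal spanned by the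
monomials with some exponent `> m`.

The differential preserves the multidegree `w = a + 1_T` of `t^a e_T`. Call `j` free if
`1 ≤ w_j ≤ m`, and let `h` contract with the least free coordinate `i`:
`t^a e_T ↦ ± t^(a - δ_i) e_(T ∪ i)` if `i ∉ T`, and `0` otherwise. Since the pivot depends only
on `w`, already over `R` one gets `dh + hd = id` on the multidegrees with a free coordinate and
`0` on the others, and `h` maps `J`-valued cochains to `J`-valued ones. Modulo `J`, the only
basis elements `t^a e_T` (`a ≤ m`) without a free coordinate are the `z_T`, so every cycle is
homologous to a combination of the `z_S`. These are independent because the coefficient of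
`t^(m·1_S)` in `(dy)_S` vanishes: each term of `(dy)_S` is divisible by a `t_i` with `i ∉ S`.
-/

theorem Module.Basis.map_mem_of_repr_ne_zero {ι R M N : Type*} [Semiring R] [AddCommMonoid M]
    [Module R M] [AddCommMonoid N] [Module R N] (b : Module.Basis ι R M) (φ : M →ₗ[R] N)
    {p : Submodule R N} {x : M} (h : ∀ i, b.repr x i ≠ 0 → φ (b i) ∈ p) : φ x ∈ p := by
  rw [← b.linearCombination_repr x, Finsupp.linearCombination_apply, map_finsuppSum]
  exact Submodule.finsuppSum_mem _ _ _ _ fun i hi => by rw [map_smul]; exact p.smul_mem _ (h i hi)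

namespace KoszulReduced

open Finset

variable {k r m}

def numBelow {α : Type*} [LinearOrder α] (S : Finset α) (i : α) : ℕ :=
  (S.filter (fun j => j < i)).card

theorem numBelow_insert_add_numBelow_insert {α : Type*} [LinearOrder α] {U : Finset α} {i j : α}
    (hij : i ≠ j) (hi : i ∉ U) (hj : j ∉ U) :
    numBelow (insert i U) j + numBelow (insert j U) i = numBelow U j + numBelow U i + 1 := by
  have hi' : i ∉ U.filter (· < j) := fun h => hi (mem_filter.mp h).1
  have hj' : j ∉ U.filter (· < i) := fun h => hj (mem_filter.mp h).1
  rcases hij.lt_or_gt with h | h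
  · simp only [numBelow, filter_insert, h, if_true, h.not_gt, if_false, card_insert_of_notMem hi']
    omega
  · simp only [numBelow, filter_insert, h, if_true, h.not_gt, if_false, card_insert_of_notMem hj']
    omega

theorem neg_one_pow_mul_self {R : Type*} [Monoid R] [HasDistribNeg R] (n : ℕ) :
    ((-1 : R) ^ n) * (-1) ^ n = 1 := by
  rw [← pow_add, ← two_mul, pow_mul, neg_one_sq, one_pow]

theorem mem_Jdl_iff {p : MvPolynomial (Fin r) k} :
    p ∈ Jdl k r m ↔ ∀ a ∈ p.support, ∃ i, m < a i := by
  have hJ : Jdl k r m = Ideal.span ((fun s => monomial s (1 : k)) ''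
      Set.range fun i : Fin r => Finsupp.single i (m + 1)) := by
    rw [Jdl, ← Set.range_comp]
    simp only [Function.comp_def, X_pow_eq_monomial]
  simp only [hJ, mem_ideal_span_monomial_image, Set.exists_range_iff, Finsupp.single_le_iff,
    Nat.succ_le_iff]

theorem monomial_mem_Jdl {a : Fin r →₀ ℕ} {i : Fin r} (hi : m < a i) (c : k) :
    monomial a c ∈ Jdl k r m :=
  mem_Jdl_iff.mpr fun b hb => ⟨i, by rwa [mem_singleton.mp (support_monomial_subset hb)]⟩

theorem coeff_eq_zero_of_mem_Jdl {p : MvPolynomial (Fin r) k} (hp : p ∈ Jdl k r m)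
    {a : Fin r →₀ ℕ} (ha : ∀ i, a i ≤ m) : coeff a p = 0 := by
  by_contra h
  obtain ⟨i, hi⟩ := mem_Jdl_iff.mp hp a (mem_support_iff.mpr h)
  exact (ha i).not_gt hi

abbrev Cochain (k : Type*) [Field k] (r : ℕ) := Finset (Fin r) → MvPolynomial (Fin r) k

noncomputable def koszulD : Cochain k r →ₗ[k] Cochain k r :=
  LinearMap.pi fun S => ∑ i ∈ Sᶜ,
    LinearMap.mulLeft k ((-1) ^ numBelow S i * X i) ∘ₗ LinearMap.proj (insert i S)

theorem koszulD_apply (f : Cochain k r) (S : Finset (Fin r)) :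
    koszulD f S = ∑ i ∈ Sᶜ, (-1) ^ numBelow S i * X i * f (insert i S) := by
  simp [koszulD, mul_assoc]

variable (m) in
noncomputable def reduce : Cochain k r →ₗ[k] (Finset (Fin r) → Rbar k r m) :=
  (Ideal.Quotient.mkₐ k (Jdl k r m)).toLinearMap.compLeft _

theorem reduce_apply (f : Cochain k r) (S : Finset (Fin r)) :
    reduce m f S = Ideal.Quotient.mk (Jdl k r m) (f S) := rfl

theorem mem_ker_reduce {f : Cochain k r} : f ∈ LinearMap.ker (reduce m) ↔ ∀ S, f S ∈ Jdl k r m := by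
  simp [funext_iff, reduce_apply, Ideal.Quotient.eq_zero_iff_mem]

theorem single_monomial_mem_ker_reduce {a : Fin r →₀ ℕ} {j : Fin r} (hj : m < a j)
    (T : Finset (Fin r)) (c : k) :
    (Pi.single T (monomial a c) : Cochain k r) ∈ LinearMap.ker (reduce m) := by
  refine mem_ker_reduce.mpr fun S => ?_
  rw [Pi.single_apply]
  split_ifs
  · exact monomial_mem_Jdl hj c
  · exact zero_mem _

theorem reduce_surjective : Function.Surjective (reduce (k := k) (r := r) m) :=
  Ideal.Quotient.mk_surjective.comp_left

theorem koszulDbar_apply (m' : ℕ) (x : Finset (Fin r) → Rbar k r m) (S : Finset (Fin r)) :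
    koszulDbar k r m m' x S = ∑ i ∈ Sᶜ,
      Ideal.Quotient.mk (Jdl k r m) ((-1) ^ numBelow S i * X i ^ (m' + 1)) * x (insert i S) := by
  simp only [koszulDbar, LinearMap.pi_apply, LinearMap.sum_apply, LinearMap.smul_apply,
    LinearMap.proj_apply, smul_eq_mul, numBelow]

theorem koszulDbar_reduce (f : Cochain k r) :
    koszulDbar k r m 0 (reduce m f) = reduce m (koszulD f) := by
  funext S
  simp [koszulDbar_apply, koszulD_apply, reduce_apply, map_sum]

variable (m) in
noncomputable def zExp (S : Finset (Fin r)) : Fin r →₀ ℕ := ∑ i ∈ S, Finsupp.single i m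

theorem zExp_apply (S : Finset (Fin r)) (j : Fin r) : zExp m S j = if j ∈ S then m else 0 := by
  simp [zExp, Finsupp.finsetSum_apply, Finsupp.single_apply]

theorem prod_X_pow_eq_monomial_zExp (S : Finset (Fin r)) :
    ∏ i ∈ S, (X i : MvPolynomial (Fin r) k) ^ m = monomial (zExp m S) 1 := by
  simp [zExp, monomial_sum_one, X_pow_eq_monomial]

theorem zb_eq_reduce (S : Finset (Fin r)) :
    zb k r m S = reduce m (Pi.single S (monomial (zExp m S) 1)) := by
  funext T
  rw [reduce_apply, zb, Pi.single_apply, Pi.single_apply, prod_X_pow_eq_monomial_zExp]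
  split_ifs <;> simp

theorem sum_smul_zb (c : Finset (Fin r) → k) :
    ∑ S, c S • zb k r m S = reduce m fun S => monomial (zExp m S) (c S) := by
  funext T
  simp only [Finset.sum_apply, Pi.smul_apply, zb, Pi.single_apply, smul_ite, smul_zero,
    sum_ite_eq, mem_univ, if_true, reduce_apply, prod_X_pow_eq_monomial_zExp]
  rw [← Ideal.Quotient.mkₐ_eq_mk k, ← map_smul, smul_monomial, smul_eq_mul, mul_one]

theorem koszulDbar_self_eq_zero : koszulDbar k r m m = 0 := by
  refine LinearMap.ext fun x => funext fun S => ?_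
  rw [koszulDbar_apply]
  refine sum_eq_zero fun i _ => ?_
  have : Ideal.Quotient.mk (Jdl k r m) (X i ^ (m + 1)) = 0 :=
    Ideal.Quotient.eq_zero_iff_mem.mpr (Ideal.subset_span ⟨i, rfl⟩)
  rw [map_mul, this, mul_zero, zero_mul]

theorem koszulD_single_monomial (U : Finset (Fin r)) (b : Fin r →₀ ℕ) (c : k) :
    koszulD (Pi.single U (monomial b c)) = ∑ j ∈ U, Pi.single (U.erase j)
      (monomial (Finsupp.single j 1 + b) ((-1) ^ numBelow (U.erase j) j * c)) := by
  funext S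
  have hsets : {i ∈ Sᶜ | insert i S = U} = {j ∈ U | S = U.erase j} := by
    ext i
    simp only [mem_filter, mem_compl]
    constructor
    · rintro ⟨hiS, rfl⟩
      exact ⟨mem_insert_self i S, (erase_insert hiS).symm⟩
    · rintro ⟨hiU, rfl⟩
      exact ⟨notMem_erase i U, insert_erase hiU⟩
  simp only [koszulD_apply, Finset.sum_apply, Pi.single_apply, mul_ite, mul_zero]
  rw [← sum_filter, ← sum_filter, hsets]
  refine sum_congr rfl fun j hj => ?_
  obtain ⟨hjU, rfl⟩ := mem_filter.mp hj
  rw [monomial_single_add, pow_one, ← C_mul_monomial, map_pow, map_neg, map_one]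
  ring

theorem koszulDbar_zb (S : Finset (Fin r)) : koszulDbar k r m 0 (zb k r m S) = 0 := by
  rw [zb_eq_reduce, koszulDbar_reduce, ← LinearMap.mem_ker, koszulD_single_monomial]
  exact sum_mem fun j hj => single_monomial_mem_ker_reduce (j := j) (by simp [zExp_apply, hj]) _ _

theorem coeff_zExp_koszulD (y : Cochain k r) (S : Finset (Fin r)) :
    coeff (zExp m S) (koszulD y S) = 0 := by
  rw [koszulD_apply, coeff_sum]
  refine sum_eq_zero fun i hi => ?_
  rw [mul_right_comm, mul_comm, coeff_X_mul', if_neg]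
  rw [Finsupp.notMem_support_iff, zExp_apply, if_neg (by simpa using hi)]

theorem eq_zero_of_sum_smul_zb_mem_range (c : Finset (Fin r) → k)
    (h : ∑ S, c S • zb k r m S ∈ LinearMap.range (koszulDbar k r m 0)) : c = 0 := by
  obtain ⟨x, hx⟩ := h
  obtain ⟨y, rfl⟩ := reduce_surjective x
  rw [koszulDbar_reduce, sum_smul_zb, ← sub_eq_zero, ← map_sub, ← LinearMap.mem_ker,
    mem_ker_reduce] at hx
  funext S
  have hlow : ∀ i, zExp m S i ≤ m := fun i => by rw [zExp_apply]; split_ifs <;> omega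
  simpa [coeff_zExp_koszulD] using coeff_eq_zero_of_mem_Jdl (hx S) hlow

theorem zb_univ_notMem_range : zb k r m univ ∉ LinearMap.range (koszulDbar k r m 0) := by
  intro h
  have hsum :
      ∑ S, (Pi.single univ (1 : k) : Finset (Fin r) → k) S • zb k r m S = zb k r m univ := by
    simp [Pi.single_apply, ite_smul]
  have hc := eq_zero_of_sum_smul_zb_mem_range _ (hsum ▸ h)
  simpa using congrFun hc univ

theorem kMulBar_zb {S T : Finset (Fin r)} (hST : Disjoint S T) :
    kMulBar k r m (zb k r m S) (zb k r m T) =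
      ((-1 : Rbar k r m) ^ (∑ i ∈ S, (T.filter (fun j => j < i)).card)) • zb k r m (S ∪ T) := by
  funext U
  have hzb : ∀ S' ≠ S, zb k r m S S' = 0 := fun S' h => by simp [zb, h]
  rw [kMulBar]
  by_cases hU : U = S ∪ T
  · subst hU
    rw [sum_eq_single_of_mem S (mem_powerset.mpr subset_union_left)
      (fun S' _ h => by rw [hzb S' h, zero_mul, mul_zero]), union_sdiff_cancel_left hST]
    simp only [zb, Pi.single_eq_same, Pi.smul_apply, smul_eq_mul, prod_union hST, map_mul]
  · refine (sum_eq_zero fun S' hS' => ?_).trans (by simp [zb, hU])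
    by_cases h : S' = S
    · subst h
      have : U \ S' ≠ T := fun hT =>
        hU (by rw [← hT, union_sdiff_of_subset (mem_powerset.mp hS')])
      simp [zb, this]
    · rw [hzb S' h, zero_mul, mul_zero]

theorem kIotaBar_single_one (S : Finset (Fin r)) : kIotaBar k r m (Pi.single S 1) = zb k r m S := by
  funext T
  by_cases h : T = S
  · subst h
    simp [kIotaBar, zb]
  · simp [kIotaBar, zb, h]

def weight (T : Finset (Fin r)) (a : Fin r →₀ ℕ) (j : Fin r) : ℕ := a j + if j ∈ T then 1 else 0

variable (m) in
def freeCoords (w : Fin r → ℕ) : Finset (Fin r) := univ.filter fun j => w j ≠ 0 ∧ w j ≤ m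

theorem weight_erase_single_add {T : Finset (Fin r)} {a : Fin r →₀ ℕ} {j : Fin r} (hj : j ∈ T) :
    weight (T.erase j) (Finsupp.single j 1 + a) = weight T a := by
  funext l
  by_cases h : l = j
  · subst h
    simp [weight, hj, add_comm]
  · simp [weight, h]

theorem not_nonempty_freeCoords_weight_iff {T : Finset (Fin r)} {a : Fin r →₀ ℕ}
    (ha : ∀ i, a i ≤ m) : ¬(freeCoords m (weight T a)).Nonempty ↔ a = zExp m T := by
  simp only [not_nonempty_iff_eq_empty, freeCoords, eq_empty_iff_forall_notMem, mem_filter, mem_univ, true_and,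
    Finsupp.ext_iff, zExp_apply]
  simp only [weight]
  refine forall_congr' fun j => ?_
  have := ha j
  by_cases hj : j ∈ T <;> simp only [hj, if_true, if_false] <;> omega

noncomputable def contract (i : Fin r) (T : Finset (Fin r)) (a : Fin r →₀ ℕ) : Cochain k r :=
  if i ∈ T then 0
  else Pi.single (insert i T) (monomial (a - Finsupp.single i 1) ((-1) ^ numBelow T i))

theorem koszulD_contract_add_sum {i : Fin r} {T : Finset (Fin r)} {a : Fin r →₀ ℕ}
    (hi : i ∉ T → a i ≠ 0) :
    koszulD (contract i T a) + ∑ j ∈ T, ((-1 : k) ^ numBelow (T.erase j) j) •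
      contract i (T.erase j) (Finsupp.single j 1 + a) = Pi.single T (monomial a (1 : k)) := by
  by_cases hiT : i ∈ T
  · rw [contract, if_pos hiT, map_zero, zero_add, sum_eq_single_of_mem i hiT]
    · rw [contract, if_neg (notMem_erase i T), insert_erase hiT, add_tsub_cancel_left,
        ← Pi.single_smul, smul_monomial, smul_eq_mul, neg_one_pow_mul_self]
    · intro j _ hji
      rw [contract, if_pos (mem_erase.mpr ⟨Ne.symm hji, hiT⟩), smul_zero]
  have hai : Finsupp.single i 1 ≤ a :=
    Finsupp.single_le_iff.mpr (Nat.one_le_iff_ne_zero.mpr (hi hiT))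
  rw [contract, if_neg hiT, koszulD_single_monomial, sum_insert hiT, erase_insert hiT,
    add_tsub_cancel_of_le hai, neg_one_pow_mul_self, add_assoc, ← sum_add_distrib,
    sum_eq_zero, add_zero]
  intro j hj
  have hij : i ≠ j := fun h => hiT (h ▸ hj)
  have hiU : i ∉ T.erase j := fun h => hiT (mem_of_mem_erase h)
  have hsign := numBelow_insert_add_numBelow_insert hij hiU (notMem_erase j T)
  rw [insert_erase hj] at hsign
  rw [contract, if_neg hiU, erase_insert_of_ne hij, ← Pi.single_smul, ← Pi.single_add,
    smul_monomial, add_tsub_assoc_of_le hai, ← map_add, smul_eq_mul, ← pow_add, ← pow_add, hsign,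
    pow_succ, mul_neg_one, neg_add_cancel, map_zero, Pi.single_zero]

variable (m) in
noncomputable def homotopyOn (T : Finset (Fin r)) (a : Fin r →₀ ℕ) : Cochain k r :=
  if h : (freeCoords m (weight T a)).Nonempty then contract ((freeCoords m (weight T a)).min' h) T a
  else 0

variable (k r) in
noncomputable def monoBasis : Module.Basis (Σ _ : Finset (Fin r), Fin r →₀ ℕ) k (Cochain k r) :=
  Pi.basis fun _ => basisMonomials (Fin r) k

theorem monoBasis_apply (T : Finset (Fin r)) (a : Fin r →₀ ℕ) :
    monoBasis k r ⟨T, a⟩ = Pi.single T (monomial a 1) := by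
  simp [monoBasis]

theorem monoBasis_repr (f : Cochain k r) (T : Finset (Fin r)) (a : Fin r →₀ ℕ) :
    (monoBasis k r).repr f ⟨T, a⟩ = coeff a (f T) := rfl

variable (m) in
noncomputable def homotopy : Cochain k r →ₗ[k] Cochain k r :=
  (monoBasis k r).constr k fun p => homotopyOn m p.1 p.2

theorem homotopy_single_monomial (T : Finset (Fin r)) (a : Fin r →₀ ℕ) (c : k) :
    homotopy m (Pi.single T (monomial a c)) = c • homotopyOn m T a := by
  have : Pi.single T (monomial a c) = c • monoBasis k r ⟨T, a⟩ := by
    rw [monoBasis_apply, ← Pi.single_smul, smul_monomial, smul_eq_mul, mul_one]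
  rw [this, map_smul, homotopy, Module.Basis.constr_basis]

theorem koszulD_homotopy_add_homotopy_koszulD (T : Finset (Fin r)) (a : Fin r →₀ ℕ) :
    koszulD (homotopy m (monoBasis k r ⟨T, a⟩)) + homotopy m (koszulD (monoBasis k r ⟨T, a⟩)) =
      if (freeCoords m (weight T a)).Nonempty then monoBasis k r ⟨T, a⟩ else 0 := by
  rw [monoBasis_apply, koszulD_single_monomial, map_sum, homotopy_single_monomial, one_smul]
  simp only [homotopy_single_monomial, mul_one]
  rw [sum_congr rfl fun j hj => by rw [homotopyOn, weight_erase_single_add hj]]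
  unfold homotopyOn
  split_ifs with h
  · have hi := (mem_filter.mp ((freeCoords m (weight T a)).min'_mem h)).2
    exact koszulD_contract_add_sum fun hiT => by simpa [weight, hiT] using hi.1
  · simp

theorem homotopyOn_mem_ker_reduce {T : Finset (Fin r)} {a : Fin r →₀ ℕ} {j : Fin r}
    (hj : m < a j) : (homotopyOn m T a : Cochain k r) ∈ LinearMap.ker (reduce m) := by
  unfold homotopyOn
  split_ifs with h
  · have hi := (mem_filter.mp ((freeCoords m (weight T a)).min'_mem h)).2
    generalize (freeCoords m (weight T a)).min' h = i at hi ⊢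
    unfold contract
    split_ifs with hiT
    · exact zero_mem _
    have hij : i ≠ j := by
      rintro rfl
      simp only [weight, hiT, if_false, add_zero] at hi
      omega
    exact single_monomial_mem_ker_reduce (j := j)
      (by simpa [Finsupp.single_apply, hij] using hj) _ _
  · exact zero_mem _

theorem homotopy_mem_ker_reduce {f : Cochain k r} (hf : f ∈ LinearMap.ker (reduce m)) :
    homotopy m f ∈ LinearMap.ker (reduce m) := by
  refine (monoBasis k r).map_mem_of_repr_ne_zero _ fun ⟨T, a⟩ ha => ?_
  rw [monoBasis_repr] at ha
  obtain ⟨j, hj⟩ : ∃ j, m < a j := by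
    by_contra! hlow
    exact ha (coeff_eq_zero_of_mem_Jdl (mem_ker_reduce.mp hf T) hlow)
  rw [monoBasis_apply, homotopy_single_monomial, one_smul]
  exact homotopyOn_mem_ker_reduce hj

variable (m) in
noncomputable def cycleProj : Cochain k r →ₗ[k] Cochain k r :=
  LinearMap.pi fun S => monomial (zExp m S) ∘ₗ lcoeff k (zExp m S) ∘ₗ LinearMap.proj S

theorem reduce_cycleProj (y : Cochain k r) :
    reduce m (cycleProj m y) = ∑ S, coeff (zExp m S) (y S) • zb k r m S :=
  (sum_smul_zb _).symm

theorem cycleProj_monoBasis (T : Finset (Fin r)) (a : Fin r →₀ ℕ) :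
    cycleProj m (monoBasis k r ⟨T, a⟩) = if a = zExp m T then monoBasis k r ⟨T, a⟩ else 0 := by
  funext S
  by_cases hS : S = T
  · subst hS
    split_ifs with ha <;> simp [cycleProj, monoBasis_apply, coeff_monomial, ha]
  · split_ifs <;> simp [cycleProj, monoBasis_apply, hS]

theorem sub_cycleProj_sub_koszulD_homotopy_mem_ker {y : Cochain k r}
    (hy : koszulD y ∈ LinearMap.ker (reduce m)) :
    y - cycleProj m y - koszulD (homotopy m y) ∈ LinearMap.ker (reduce m) := by
  set ψ : Cochain k r →ₗ[k] Cochain k r :=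
    LinearMap.id - cycleProj m - koszulD ∘ₗ homotopy m - homotopy m ∘ₗ koszulD
  have hsplit : y - cycleProj m y - koszulD (homotopy m y) = ψ y + homotopy m (koszulD y) := by
    simp [ψ]
  rw [hsplit]
  refine add_mem ((monoBasis k r).map_mem_of_repr_ne_zero ψ fun ⟨T, a⟩ _ => ?_)
    (homotopy_mem_ker_reduce hy)
  have hψ : ψ (monoBasis k r ⟨T, a⟩) = monoBasis k r ⟨T, a⟩
      - (if a = zExp m T then monoBasis k r ⟨T, a⟩ else 0)
      - (if (freeCoords m (weight T a)).Nonempty then monoBasis k r ⟨T, a⟩ else 0) := by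
    rw [← koszulD_homotopy_add_homotopy_koszulD, ← cycleProj_monoBasis]
    simp [ψ, sub_sub]
  rw [hψ]
  by_cases hlow : ∀ i, a i ≤ m
  · have hfree := not_nonempty_freeCoords_weight_iff (T := T) hlow
    by_cases ha : a = zExp m T
    · rw [if_pos ha, if_neg (hfree.mpr ha), sub_self, sub_zero]
      exact zero_mem _
    · rw [if_neg ha, if_pos (not_not.mp (mt hfree.mp ha)), sub_zero, sub_self]
      exact zero_mem _
  · obtain ⟨j, hj⟩ := not_forall.mp hlow
    replace hj := not_le.mp hj
    have he : monoBasis k r ⟨T, a⟩ ∈ LinearMap.ker (reduce m) := by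
      rw [monoBasis_apply]
      exact single_monomial_mem_ker_reduce hj _ _
    refine sub_mem (sub_mem he ?_) ?_ <;> split_ifs <;> first | exact he | exact zero_mem _

theorem exists_sub_sum_smul_zb_mem_range {x : Finset (Fin r) → Rbar k r m}
    (hx : koszulDbar k r m 0 x = 0) :
    ∃ c : Finset (Fin r) → k,
      x - ∑ S, c S • zb k r m S ∈ LinearMap.range (koszulDbar k r m 0) := by
  obtain ⟨y, rfl⟩ := reduce_surjective x
  have hy : koszulD y ∈ LinearMap.ker (reduce m) := by
    rwa [LinearMap.mem_ker, ← koszulDbar_reduce]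
  have h := sub_cycleProj_sub_koszulD_homotopy_mem_ker hy
  rw [LinearMap.mem_ker, map_sub, map_sub, sub_eq_zero, reduce_cycleProj] at h
  exact ⟨_, reduce m (homotopy m y), by rw [koszulDbar_reduce, h]⟩

end KoszulReduced

theorem statement3 (k : Type*) [Field k] (r m : ℕ) :
    -- (i) the induced differential on K_r(m) ⊗_R R̄ vanishes
    koszulDbar k r m m = 0 ∧
    -- (ii) the z_S are cycles in K_r(0) ⊗_R R̄ …
    (∀ S : Finset (Fin r), koszulDbar k r m 0 (zb k r m S) = 0) ∧
    -- … whose cohomology classes are linearly independent over k …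
    (∀ c : Finset (Fin r) → k,
      (∑ S : Finset (Fin r), c S • zb k r m S) ∈ LinearMap.range (koszulDbar k r m 0) →
        c = 0) ∧
    -- … and span the cohomology H(K_r(0) ⊗_R R̄) over k …
    (∀ x : Finset (Fin r) → Rbar k r m, koszulDbar k r m 0 x = 0 →
      ∃ c : Finset (Fin r) → k,
        x - ∑ S : Finset (Fin r), c S • zb k r m S ∈ LinearMap.range (koszulDbar k r m 0)) ∧
    -- … and multiply by the exterior algebra rule (so H(K_r(0) ⊗_R R̄) is the exterior
    -- algebra over k on the classes [tᵢ^m sᵢ^0])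
    (∀ S T : Finset (Fin r), Disjoint S T →
      kMulBar k r m (zb k r m S) (zb k r m T) =
        ((-1 : Rbar k r m) ^ (∑ i ∈ S, (T.filter (fun j => j < i)).card)) •
          zb k r m (S ∪ T)) ∧
    -- (iii) ι sends sᵢ^m to the cycle tᵢ^m sᵢ^0 representing [tᵢ^m sᵢ^0] …
    (∀ i : Fin r, kIotaBar k r m (Pi.single {i} 1) = zb k r m {i}) ∧
    -- … and sends s₁^m∧…∧s_r^m to the class of t₁^m⋯t_r^m s₁^0∧…∧s_r^0 …
    kIotaBar k r m (Pi.single Finset.univ 1) = zb k r m Finset.univ ∧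
    -- … which is nonzero in cohomology
    zb k r m Finset.univ ∉ LinearMap.range (koszulDbar k r m 0) :=
  ⟨KoszulReduced.koszulDbar_self_eq_zero, KoszulReduced.koszulDbar_zb,
    KoszulReduced.eq_zero_of_sum_smul_zb_mem_range,
    fun _ hx => KoszulReduced.exists_sub_sum_smul_zb_mem_range hx,
    fun _ _ => KoszulReduced.kMulBar_zb,
    fun i => KoszulReduced.kIotaBar_single_one {i}, KoszulReduced.kIotaBar_single_one Finset.univ,
    KoszulReduced.zb_univ_notMem_range⟩
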